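/- Let T be a linear subspace of ℝⁿ with orthogonal projection P_T, and let P̂ : ℝⁿ → ℝⁿ be a symmetric positive semidefinite linear map. Then I + P̂ is invertible, and the linear map W = P_T ∘ (I + P̂)^{-1} ∘ P_T is firmly nonexpansive: for every x ∈ ℝⁿ, ‖W x‖² ≤ ⟨W x, x⟩. -/

import Mathlib

noncomputable section
open Filter Topology

/-- `ℝⁿ` as a Euclidean space. -/
abbrev E (n : ℕ) := EuclideanSpace ℝ (Fin n)

/-- Orthogonal projection onto a subspace `T`, as an endomorphism of `ℝⁿ`. -/
def projCLM {n : ℕ} (T : Submodule ℝ (E n)) : E n →L[ℝ] E n :=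
  T.subtypeL.comp (T.orthogonalProjectionOnto)

/-- A linear map is symmetric positive semidefinite. -/
def IsSymPSD {n : ℕ} (A : E n →L[ℝ] E n) : Prop :=
  (∀ x y : E n, (inner ℝ (A x) y : ℝ) = inner ℝ x (A y)) ∧ ∀ x : E n, (0 : ℝ) ≤ inner ℝ (A x) x

/-- `W = P_T ∘ (I + P_T ∘ H ∘ P_T)⁻¹ ∘ P_T`, the building block of the Douglas–Rachford
fixed-point matrix (`Ring.inverse` is the genuine inverse since `I + P_T H P_T` is
invertible for symmetric positive semidefinite `H`). -/
def Wop {n : ℕ} (T : Submodule ℝ (E n)) (H : E n →L[ℝ] E n) : E n →L[ℝ] E n :=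
  projCLM T * Ring.inverse (1 + projCLM T * H * projCLM T) * projCLM T

/-- The Douglas–Rachford fixed-point matrix `M = I + 2 W_G W_J − W_G − W_J`. -/
def Mop {n : ℕ} (TJ TG : Submodule ℝ (E n)) (HJ HG : E n →L[ℝ] E n) : E n →L[ℝ] E n :=
  1 + (2 : ℝ) • (Wop TG HG * Wop TJ HJ) - Wop TG HG - Wop TJ HJ

/-- The relaxed matrix `M_λ = (1 − λ) I + λ M`. -/
def Mlam {n : ℕ} (lam : ℝ) (TJ TG : Submodule ℝ (E n)) (HJ HG : E n →L[ℝ] E n) :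
    E n →L[ℝ] E n :=
  (1 - lam) • (1 : E n →L[ℝ] E n) + lam • Mop TJ TG HJ HG

/-- The fixed-point set `Fix A = {x | A x = x}` as a submodule, i.e. `ker (A − I)`. -/
def FixM {n : ℕ} (A : E n →L[ℝ] E n) : Submodule ℝ (E n) :=
  LinearMap.ker ((A - 1 : E n →L[ℝ] E n) : E n →ₗ[ℝ] E n)

/-- `M^∞`: the orthogonal projection onto `Fix M`. -/
def Minf {n : ℕ} (TJ TG : Submodule ℝ (E n)) (HJ HG : E n →L[ℝ] E n) : E n →L[ℝ] E n :=
  projCLM (FixM (Mop TJ TG HJ HG))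

/-- The spectral radius of an endomorphism of `ℝⁿ`: the supremum of the moduli of the
complex eigenvalues (eigenvalues of the complexified matrix). -/
def specRad {n : ℕ} (A : E n →L[ℝ] E n) : ℝ :=
  sSup ((fun z : ℂ => ‖z‖) ''
    spectrum ℂ (((LinearMap.toMatrix (EuclideanSpace.basisFun (Fin n) ℝ).toBasis
      (EuclideanSpace.basisFun (Fin n) ℝ).toBasis) A.toLinearMap).map (algebraMap ℝ ℂ)))

/-- The cosine of the Friedrichs angle between two subspaces `U` and `V`. -/
def cF {n : ℕ} (U V : Submodule ℝ (E n)) : ℝ :=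
  sSup {r : ℝ | ∃ u v : E n, u ∈ U ⊓ (U ⊓ V)ᗮ ∧ v ∈ V ⊓ (U ⊓ V)ᗮ ∧
    ‖u‖ ≤ 1 ∧ ‖v‖ ≤ 1 ∧ r = (inner ℝ u v : ℝ)}

/-!
Since `⟨P̂ x, x⟩ ≥ 0`, the form `⟨(1 + P̂) x, x⟩ ≥ ‖x‖²` is coercive, so `1 + P̂` is invertible
by Lax–Milgram, and for `z = (1 + P̂)⁻¹ y` it gives `⟨z, y⟩ = ⟨z, (1 + P̂) z⟩ ≥ ‖z‖²`.
Conjugating by the self-adjoint contraction `P_T` preserves `‖B y‖² ≤ ⟨B y, y⟩`.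
-/

open scoped RealInnerProductSpace

section FirmlyNonexpansive

variable {F : Type*} [NormedAddCommGroup F] [InnerProductSpace ℝ F]

def IsFirmlyNonexpansive (B : F →L[ℝ] F) : Prop :=
  ∀ x, ‖B x‖ ^ 2 ≤ ⟪B x, x⟫

theorem norm_sq_le_inner_one_add_apply {A : F →L[ℝ] F} (hA : ∀ x, 0 ≤ ⟪A x, x⟫) (x : F) :
    ‖x‖ ^ 2 ≤ ⟪(1 + A) x, x⟫ := by
  rw [add_apply, one_apply_eq_self, inner_add_left, real_inner_self_eq_norm_sq]
  linarith [hA x]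

theorem isCoercive_inner_one_add {A : F →L[ℝ] F} (hA : ∀ x, 0 ≤ ⟪A x, x⟫) :
    IsCoercive ((innerSL ℝ).comp (1 + A)) :=
  ⟨1, one_pos, fun x => by
    simpa only [one_mul, ← sq, ContinuousLinearMap.comp_apply, innerSL_apply_apply] using
      norm_sq_le_inner_one_add_apply hA x⟩

theorem isUnit_one_add_of_inner_nonneg [CompleteSpace F] {A : F →L[ℝ] F}
    (hA : ∀ x, 0 ≤ ⟪A x, x⟫) : IsUnit (1 + A) := by
  have hcoer := isCoercive_inner_one_add hA
  have hsharp : InnerProductSpace.continuousLinearMapOfBilin ((innerSL ℝ).comp (1 + A)) = 1 + A :=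
    ContinuousLinearMap.ext fun v => ext_inner_right ℝ fun w => by
      simp only [InnerProductSpace.continuousLinearMapOfBilin_apply,
        ContinuousLinearMap.comp_apply, innerSL_apply_apply]
  rw [ContinuousLinearMap.isUnit_iff_bijective, ← hsharp]
  exact ⟨LinearMap.ker_eq_bot.mp hcoer.ker_eq_bot, LinearMap.range_eq_top.mp hcoer.range_eq_top⟩

theorem isFirmlyNonexpansive_inverse_one_add [CompleteSpace F] {A : F →L[ℝ] F}
    (hA : ∀ x, 0 ≤ ⟪A x, x⟫) : IsFirmlyNonexpansive (Ring.inverse (1 + A)) := by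
  intro y
  set z := Ring.inverse (1 + A) y
  have hz : (1 + A) z = y := by
    rw [← mul_apply_eq_comp, Ring.mul_inverse_cancel _ (isUnit_one_add_of_inner_nonneg hA),
      one_apply_eq_self]
  calc ‖z‖ ^ 2 ≤ ⟪(1 + A) z, z⟫ := norm_sq_le_inner_one_add_apply hA z
    _ = ⟪z, y⟫ := by rw [hz, real_inner_comm]

theorem IsFirmlyNonexpansive.starProjection_mul_mul {B : F →L[ℝ] F} (hB : IsFirmlyNonexpansive B)
    (K : Submodule ℝ F) [K.HasOrthogonalProjection] :
    IsFirmlyNonexpansive (K.starProjection * B * K.starProjection) := by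
  intro x
  calc ‖K.starProjection (B (K.starProjection x))‖ ^ 2 ≤ ‖B (K.starProjection x)‖ ^ 2 := by
        gcongr; exact K.norm_starProjection_apply_le _
    _ ≤ ⟪B (K.starProjection x), K.starProjection x⟫ := hB _
    _ = ⟪K.starProjection (B (K.starProjection x)), x⟫ :=
        (K.inner_starProjection_left_eq_right _ _).symm

end FirmlyNonexpansive

/-- For a subspace `T` and a symmetric positive semidefinite `P̂`,
`I + P̂` is invertible and `W = P_T (I + P̂)⁻¹ P_T` is firmly nonexpansive:
`‖W x‖² ≤ ⟨W x, x⟩` for all `x`. -/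
theorem statement6 {n : ℕ} (T : Submodule ℝ (E n)) (Phat : E n →L[ℝ] E n)
    (hPhat : IsSymPSD Phat) :
    IsUnit (1 + Phat) ∧
    ∀ x : E n,
      ‖(projCLM T * Ring.inverse (1 + Phat) * projCLM T) x‖ ^ 2
        ≤ (inner ℝ ((projCLM T * Ring.inverse (1 + Phat) * projCLM T) x) x : ℝ) :=
  ⟨isUnit_one_add_of_inner_nonneg hPhat.2,
    (isFirmlyNonexpansive_inverse_one_add hPhat.2).starProjection_mul_mul T⟩
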